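/- arXiv:1602.02637 — 7 statements merged into one kernel-verified Lean document; each statement's English description precedes it below -/
import Mathlib

section
/- Let H₁, H₂ : ℤ → ℤ be functions such that there exist integers g₁, g₂ ≥ 0 with H_k(i) = 0 for i ≤ 0, H_k nondecreasing, H_k(i+1) ≤ H_k(i) + 1 for all i, and H_k(N) = N - g_k for all N ≥ 2g_k (k = 1,2). Define H₃(i) = min over j ∈ ℤ of (H₁(i-j) + H₂(j)) (the minimum exists and is attained). Then for all N ≥ 2(g₁ + g₂), H₃(N) = N - (g₁ + g₂). -/
lemma step_bound_aux (H : ℤ → ℤ) (hstep : ∀ i : ℤ, H (i + 1) ≤ H i + 1) :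
    ∀ a b : ℤ, a ≤ b → H b ≤ H a + (b - a) := by
  intro a b hab
  obtain ⟨n, rfl⟩ := Int.le.dest hab
  induction n with
  | zero => simp
  | succ k ih =>
      have : H (a + (↑k + 1)) ≤ H (a + ↑k) + 1 := by
        rw [show a + ((k : ℤ) + 1) = a + (k : ℤ) + 1 by ring]; exact hstep (a + k)
      have h2 := ih (by linarith [Int.ofNat_nonneg k])
      push_cast at this h2 ⊢
      linarith

lemma lower_bound_aux (H : ℤ → ℤ) (g : ℤ)
    (hstep : ∀ i : ℤ, H (i + 1) ≤ H i + 1)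
    (htail : ∀ N : ℤ, 2 * g ≤ N → H N = N - g) :
    ∀ i : ℤ, i - g ≤ H i := by
  intro i
  rcases le_or_gt (2 * g) i with h | h
  · rw [htail i h]
  · have h2g : H (2 * g) = g := by rw [htail (2 * g) le_rfl]; ring
    have := step_bound_aux H hstep i (2 * g) (le_of_lt h)
    rw [h2g] at this
    linarith

/-- If `H₁, H₂ : ℤ → ℤ` are counting-function-like maps with genera `g₁, g₂`, and
`H₃` is their infimal convolution, then `H₃ N = N - (g₁ + g₂)` for `N ≥ 2(g₁+g₂)`. -/
theorem inf_convolution_genus_additive (H₁ H₂ H₃ : ℤ → ℤ) (g₁ g₂ : ℤ)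
    (hg₁ : 0 ≤ g₁) (hg₂ : 0 ≤ g₂)
    (hz₁ : ∀ i : ℤ, i ≤ 0 → H₁ i = 0) (hz₂ : ∀ i : ℤ, i ≤ 0 → H₂ i = 0)
    (hmono₁ : Monotone H₁) (hmono₂ : Monotone H₂)
    (hstep₁ : ∀ i : ℤ, H₁ (i + 1) ≤ H₁ i + 1) (hstep₂ : ∀ i : ℤ, H₂ (i + 1) ≤ H₂ i + 1)
    (htail₁ : ∀ N : ℤ, 2 * g₁ ≤ N → H₁ N = N - g₁)
    (htail₂ : ∀ N : ℤ, 2 * g₂ ≤ N → H₂ N = N - g₂)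
    (hH₃ : ∀ i : ℤ, IsLeast {x : ℤ | ∃ j : ℤ, x = H₁ (i - j) + H₂ j} (H₃ i)) :
    ∀ N : ℤ, 2 * (g₁ + g₂) ≤ N → H₃ N = N - (g₁ + g₂) := by
  intro N hN
  obtain ⟨hmem, hlb⟩ := hH₃ N
  apply le_antisymm
  · -- take j = 2*g₂
    have h1 : H₁ (N - 2 * g₂) = N - 2 * g₂ - g₁ := htail₁ _ (by linarith)
    have h2 : H₂ (2 * g₂) = 2 * g₂ - g₂ := htail₂ _ le_rfl
    have := hlb ⟨2 * g₂, rfl⟩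
    rw [h1, h2] at this
    linarith
  · obtain ⟨j, hj⟩ := hmem
    have l1 := lower_bound_aux H₁ g₁ hstep₁ htail₁ (N - j)
    have l2 := lower_bound_aux H₂ g₂ hstep₂ htail₂ j
    linarith [hj ▸ (le_refl (H₃ N))]
end

section
/- Let H₁, H₂ : ℤ → ℤ be counting-function-like maps with genera g₁, g₂ (i.e. H_k(i)=0 for i≤0, H_k nondecreasing with steps 0 or 1, and H_k(N)=N-g_k for N ≥ 2g_k), and let H₃(i) = min_{j∈ℤ} (H₁(i-j) + H₂(j)), g₃ = g₁ + g₂. For t ∈ [0,1] define Υ_k(t) = -2 · min_{i∈ℤ} ( H_k(i) + (t/2)(g_k - i) ) for k = 1,2,3 (the minima exist). Then Υ₃(t) = Υ₁(t) + Υ₂(t) for all t ∈ [0,1]. -/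
/-- Borodzik–Livingston additivity: if `H₃` is the min-convolution of counting-function-like
maps `H₁, H₂` with genera `g₁, g₂` and `g₃ = g₁ + g₂`, then the associated Upsilon functions
`Υ_k(t) = -2 min_{i∈ℤ}(H_k(i) + (t/2)(g_k - i))` satisfy `Υ₃ = Υ₁ + Υ₂` on `[0,1]`. -/
theorem upsilon_additive_of_inf_convolution (H₁ H₂ H₃ : ℤ → ℤ) (g₁ g₂ g₃ : ℤ)
    (hg₁ : 0 ≤ g₁) (hg₂ : 0 ≤ g₂) (hg₃ : g₃ = g₁ + g₂)
    (hz₁ : ∀ i : ℤ, i ≤ 0 → H₁ i = 0) (hz₂ : ∀ i : ℤ, i ≤ 0 → H₂ i = 0)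
    (hmono₁ : Monotone H₁) (hmono₂ : Monotone H₂)
    (hstep₁ : ∀ i : ℤ, H₁ (i + 1) ≤ H₁ i + 1) (hstep₂ : ∀ i : ℤ, H₂ (i + 1) ≤ H₂ i + 1)
    (htail₁ : ∀ N : ℤ, 2 * g₁ ≤ N → H₁ N = N - g₁)
    (htail₂ : ∀ N : ℤ, 2 * g₂ ≤ N → H₂ N = N - g₂)
    (hH₃ : ∀ i : ℤ, IsLeast {x : ℤ | ∃ j : ℤ, x = H₁ (i - j) + H₂ j} (H₃ i))
    (Υ₁ Υ₂ Υ₃ : ℝ → ℝ)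
    (hΥ₁ : ∀ t ∈ Set.Icc (0 : ℝ) 1,
      IsLeast {x : ℝ | ∃ i : ℤ, x = (H₁ i : ℝ) + (t / 2) * ((g₁ : ℝ) - i)} (-(Υ₁ t) / 2))
    (hΥ₂ : ∀ t ∈ Set.Icc (0 : ℝ) 1,
      IsLeast {x : ℝ | ∃ i : ℤ, x = (H₂ i : ℝ) + (t / 2) * ((g₂ : ℝ) - i)} (-(Υ₂ t) / 2))
    (hΥ₃ : ∀ t ∈ Set.Icc (0 : ℝ) 1,
      IsLeast {x : ℝ | ∃ i : ℤ, x = (H₃ i : ℝ) + (t / 2) * ((g₃ : ℝ) - i)} (-(Υ₃ t) / 2)) :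
    ∀ t ∈ Set.Icc (0 : ℝ) 1, Υ₃ t = Υ₁ t + Υ₂ t := by
  intro t ht
  obtain ⟨h1mem, h1lb⟩ := hΥ₁ t ht
  obtain ⟨h2mem, h2lb⟩ := hΥ₂ t ht
  obtain ⟨h3mem, h3lb⟩ := hΥ₃ t ht
  obtain ⟨i₁, hi₁⟩ := h1mem
  obtain ⟨i₂, hi₂⟩ := h2mem
  obtain ⟨i₃, hi₃⟩ := h3mem
  -- m₃ ≤ m₁ + m₂
  have hle1 : -(Υ₃ t) / 2 ≤ -(Υ₁ t) / 2 + -(Υ₂ t) / 2 := by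
    have hmem : ((H₃ (i₁ + i₂) : ℝ) + (t / 2) * ((g₃ : ℝ) - (i₁ + i₂ : ℤ))) ∈
        {x : ℝ | ∃ i : ℤ, x = (H₃ i : ℝ) + (t / 2) * ((g₃ : ℝ) - i)} := ⟨i₁ + i₂, rfl⟩
    have h3le := h3lb hmem
    have hconv : H₃ (i₁ + i₂) ≤ H₁ i₁ + H₂ i₂ := by
      have hm : H₁ (i₁ + i₂ - i₂) + H₂ i₂ ∈ {x : ℤ | ∃ j : ℤ, x = H₁ (i₁ + i₂ - j) + H₂ j} :=
        ⟨i₂, rfl⟩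
      have := (hH₃ (i₁ + i₂)).2 hm
      simpa [add_sub_cancel_right] using this
    have hconvR : (H₃ (i₁ + i₂) : ℝ) ≤ (H₁ i₁ : ℝ) + (H₂ i₂ : ℝ) := by exact_mod_cast hconv
    have hg : ((g₃ : ℝ) - ((i₁ + i₂ : ℤ) : ℝ)) = ((g₁ : ℝ) - i₁) + ((g₂ : ℝ) - i₂) := by
      push_cast [hg₃]; ring
    rw [hi₁, hi₂]
    calc -(Υ₃ t) / 2 ≤ (H₃ (i₁ + i₂) : ℝ) + (t / 2) * ((g₃ : ℝ) - (i₁ + i₂ : ℤ)) := h3le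
      _ ≤ (H₁ i₁ : ℝ) + (H₂ i₂ : ℝ) + (t / 2) * ((g₃ : ℝ) - (i₁ + i₂ : ℤ)) := by linarith
      _ = ((H₁ i₁ : ℝ) + (t / 2) * ((g₁ : ℝ) - i₁)) + ((H₂ i₂ : ℝ) + (t / 2) * ((g₂ : ℝ) - i₂)) := by
          rw [hg]; ring
  -- m₁ + m₂ ≤ m₃
  have hle2 : -(Υ₁ t) / 2 + -(Υ₂ t) / 2 ≤ -(Υ₃ t) / 2 := by
    obtain ⟨j, hj⟩ := (hH₃ i₃).1
    have h1le := h1lb ⟨i₃ - j, rfl⟩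
    have h2le := h2lb ⟨j, rfl⟩
    have hjR : (H₃ i₃ : ℝ) = (H₁ (i₃ - j) : ℝ) + (H₂ j : ℝ) := by exact_mod_cast hj
    have hg : ((g₃ : ℝ) - (i₃ : ℝ)) = ((g₁ : ℝ) - ((i₃ - j : ℤ) : ℝ)) + ((g₂ : ℝ) - (j : ℝ)) := by
      push_cast [hg₃]; ring
    rw [hi₃, hjR, hg]
    have : (H₁ (i₃ - j) : ℝ) + (H₂ j : ℝ) +
        (t / 2) * (((g₁ : ℝ) - ((i₃ - j : ℤ) : ℝ)) + ((g₂ : ℝ) - (j : ℝ))) =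
        ((H₁ (i₃ - j) : ℝ) + (t / 2) * ((g₁ : ℝ) - ((i₃ - j : ℤ) : ℝ))) +
        ((H₂ j : ℝ) + (t / 2) * ((g₂ : ℝ) - (j : ℝ))) := by ring
    rw [this]
    exact add_le_add h1le h2le
  linarith
end

section
/- Let n ≥ 1 and for t ∈ [0,1] define Υ_{n,n+1}(t) via the semigroup formula: Υ(t) = -2·min_{i∈ℤ} ( H(i) + (t/2)(g - i) ), where H is the counting function of the numerical semigroup generated by n and n+1 and g = n(n-1)/2. Then for every integer i with 0 ≤ i ≤ ⌊(n-1)/2⌋ and every t ∈ [2i/n, (2i+2)/n] ∩ [0,1], Υ(t) = -i(i+1) - (1/2)·n·(n-1-2i)·t. -/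
private def cnt (n m : ℕ) : ℕ := ((Finset.range m).filter (fun s => s % n ≤ s / n)).card

private lemma cnt_succ (n m : ℕ) :
    cnt n (m + 1) = cnt n m + if m % n ≤ m / n then 1 else 0 := by
  unfold cnt
  rw [Finset.range_add_one, Finset.filter_insert]
  split
  · rw [Finset.card_insert_of_notMem (by simp [Finset.mem_filter])]
  · simp

private lemma divmod_succ (n a : ℕ) (hn : 0 < n) :
    ((a+1)/n = a/n ∧ (a+1)%n = a%n + 1 ∧ a%n + 1 < n) ∨
    ((a+1)/n = a/n + 1 ∧ (a+1)%n = 0 ∧ a%n + 1 = n) := by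
  have h1 := Nat.div_add_mod a n
  have h2 : a % n < n := Nat.mod_lt _ hn
  rcases eq_or_lt_of_le (Nat.succ_le_of_lt h2) with h | h
  · right
    have ha : a + 1 = (a/n + 1) * n := by
      have : (a/n + 1) * n = n * (a/n) + n := by ring
      omega
    rw [ha, Nat.mul_div_cancel _ hn, Nat.mul_mod_left]
    omega
  · left
    have ha : a + 1 = (a%n + 1) + n * (a/n) := by omega
    rw [ha, Nat.add_mul_div_left _ _ hn, Nat.add_mul_mod_self_left,
      Nat.div_eq_of_lt h, Nat.mod_eq_of_lt h]
    omega

private lemma divmod_eq (n q r : ℕ) (hn : 0 < n) (hr : r < n) :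
    (q * n + r) / n = q ∧ (q * n + r) % n = r := by
  rw [add_comm, Nat.add_mul_div_right _ _ hn, Nat.add_mul_mod_self_right,
    Nat.div_eq_of_lt hr, Nat.mod_eq_of_lt hr]
  omega

private lemma cnt_formula (n : ℕ) (hn : 0 < n) :
    ∀ i, i < n → ∀ b ≤ n, 2 * cnt n (i * n + b) = i * (i + 1) + 2 * min b (i + 1) := by
  intro i
  induction i with
  | zero =>
    intro _ b hb
    induction b with
    | zero => simp [cnt]
    | succ b ih =>
      have hb' : b < n := hb
      have h1 := cnt_succ n b
      rw [Nat.mod_eq_of_lt hb', Nat.div_eq_of_lt hb'] at h1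
      have h2 := ih (le_of_lt hb')
      simp only [Nat.zero_mul, Nat.zero_add] at *
      split at h1 <;> omega
  | succ i ihi =>
    intro hi b hb
    have hi' : i < n := by omega
    induction b with
    | zero =>
      have h1 := ihi hi' n le_rfl
      have h2 : (i+1) * n + 0 = i * n + n := by ring
      rw [h2, h1]
      have h3 : min n (i+1) = i + 1 := by omega
      have h4 : i * (i+1) + 2 * (i+1) = (i+1) * (i+1+1) := by ring
      omega
    | succ b ihb =>
      have hb' : b < n := hb
      have h1 := cnt_succ n ((i+1) * n + b)
      obtain ⟨hd, hm⟩ := divmod_eq n (i+1) b hn hb'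
      rw [hd, hm] at h1
      have h2 := ihb (le_of_lt hb')
      rw [show (i+1)*n + b + 1 = (i+1)*n + (b+1) by ring] at h1
      split at h1 <;> omega

private lemma cnt_lower (n i : ℕ) (hn : 0 < n) (hi : i + 1 ≤ n) :
    ∀ a, cnt n (i * n) + (i + 1) * (a / n) + min (a % n) (i + 1) ≤ cnt n (i * n + a) := by
  intro a
  induction a with
  | zero => simp
  | succ a ih =>
    have hm : (i * n + a) % n = a % n := by
      rw [add_comm, Nat.add_mul_mod_self_right]
    have hd : (i * n + a) / n = a / n + i := by
      rw [add_comm, Nat.add_mul_div_right _ _ hn]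
    have hstep := cnt_succ n (i * n + a)
    rw [hm, hd] at hstep
    have hiq : i * n + (a + 1) = (i * n + a) + 1 := by ring
    rw [hiq]
    rcases divmod_succ n a hn with ⟨h4, h5, h6⟩ | ⟨h4, h5, h6⟩ <;> rw [h4, h5]
    · -- no rollover
      generalize hQ : a / n = q at *
      generalize hB : a % n = b at *
      rcases le_or_gt b (q + i) with hc | hc
      · rw [if_pos hc] at hstep
        rcases le_or_gt b i with h7 | h7
        · have : min b (i+1) = b := by omega
          have : min (b+1) (i+1) = b + 1 := by omega
          omega
        · have : min b (i+1) = i+1 := by omega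
          have : min (b+1) (i+1) = i+1 := by omega
          omega
      · rw [if_neg (by omega)] at hstep
        have : min b (i+1) = i+1 := by omega
        have : min (b+1) (i+1) = i+1 := by omega
        omega
    · -- rollover
      rw [show (i+1) * (a/n + 1) = (i+1)*(a/n) + (i+1) by ring]
      generalize hQ : a / n = q at *
      generalize hB : a % n = b at *
      rcases eq_or_lt_of_le hi with h7 | h7
      · rw [if_pos (by omega)] at hstep
        have : min b (i+1) = b := by omega
        omega
      · have : min b (i+1) = i+1 := by omega
        have hb0 : min 0 (i+1) = 0 := by omega
        rw [hb0]
        rcases le_or_gt b (q + i) with hc | hc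
        · rw [if_pos hc] at hstep; omega
        · rw [if_neg (by omega)] at hstep; omega

private lemma cnt_upper (n i : ℕ) (hn : 0 < n) (hi : i ≤ n) :
    ∀ a, cnt n (i * n) ≤ cnt n (i * n - a) + i * (a / n) + (a % n - (n - i)) := by
  intro a
  induction a with
  | zero => simp
  | succ a ih =>
    have hq := Nat.div_add_mod a n
    have hblt : a % n < n := Nat.mod_lt _ hn
    rcases le_or_gt (i * n) a with hA | hA
    · have h0 : i * n - a = 0 := by omega
      have h0' : i * n - (a + 1) = 0 := by omega
      rw [h0] at ih
      rw [h0']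
      rcases divmod_succ n a hn with ⟨h4, h5, h6⟩ | ⟨h4, h5, h6⟩ <;> rw [h4, h5] <;>
        [skip; rw [show i * (a/n + 1) = i * (a/n) + i by ring]] <;>
        generalize hQ : a / n = q at * <;>
        generalize hB : a % n = b at * <;>
        omega
    · have hsub : i * n - a = (i * n - (a + 1)) + 1 := by omega
      rcases divmod_succ n a hn with ⟨h4, h5, h6⟩ | ⟨h4, h5, h6⟩ <;>
        rw [h4, h5] <;>
        [skip; rw [show i * (a/n + 1) = i * (a/n) + i by ring]] <;>
        generalize hQ : a / n = q at * <;>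
        generalize hB : a % n = b at *
      all_goals {
        have hqi : q + 1 ≤ i := by
          by_contra hcon
          have h8 : i ≤ q := by omega
          have h9 : n * i ≤ n * q := Nat.mul_le_mul_left n h8
          have h10 : i * n = n * i := by ring
          omega
        have hmdecomp : i * n - (a + 1) = (i - (q+1)) * n + (n - 1 - b) := by
          obtain ⟨c, hc⟩ : ∃ c, i = q + 1 + c := ⟨i - (q+1), by omega⟩
          subst hc
          have e1 : (q + 1 + c) * n = n * q + n + c * n := by ring
          have e2 : q + 1 + c - (q + 1) = c := by omega
          rw [e2]
          omega
        obtain ⟨hdiv, hmod⟩ := divmod_eq n (i - (q+1)) (n - 1 - b) hn (by omega)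
        rw [hsub, hmdecomp] at ih
        rw [hmdecomp]
        have hstep := cnt_succ n ((i - (q+1)) * n + (n - 1 - b))
        rw [hdiv, hmod] at hstep
        rw [hstep] at ih
        rcases le_or_gt (n - 1 - b) (i - (q+1)) with hc | hc
        · rw [if_pos hc] at ih; omega
        · rw [if_neg (by omega)] at ih; omega
      }

private lemma mem_S_iff (n s : ℕ) (hn : 0 < n) :
    (∃ m k : ℕ, s = m * n + k * (n + 1)) ↔ s % n ≤ s / n := by
  constructor
  · rintro ⟨m, k, rfl⟩
    have h1 : m * n + k * (n + 1) = (m + k) * n + k := by ring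
    rw [h1]
    have h2 : ((m + k) * n + k) % n = k % n := by
      rw [add_comm ((m+k)*n) k, Nat.add_mul_mod_self_right]
    have h3 : ((m + k) * n + k) / n = k / n + (m + k) := by
      rw [add_comm ((m+k)*n) k, Nat.add_mul_div_right _ _ hn]
    rw [h2, h3]
    have h4 := Nat.div_add_mod k n
    generalize k / n = q at *
    generalize k % n = r at *
    omega
  · intro h
    obtain ⟨c, hc⟩ : ∃ c, s / n = s % n + c := ⟨s / n - s % n, by omega⟩
    have h1 := Nat.div_add_mod s n
    rw [hc] at h1
    refine ⟨c, s % n, ?_⟩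
    have h2 : c * n + s % n * (n + 1) = n * (s % n + c) + s % n := by ring
    omega

private lemma Hcnt (n : ℕ) (hn : 0 < n) (S : Set ℕ)
    (hS : S = {s : ℕ | ∃ m k : ℕ, s = m * n + k * (n + 1)}) (j : ℤ) :
    Nat.card {s : ℕ // s ∈ S ∧ (s : ℤ) < j} = cnt n j.toNat := by
  have hset : {s : ℕ | s ∈ S ∧ (s : ℤ) < j}
      = ↑((Finset.range j.toNat).filter (fun s => s % n ≤ s / n)) := by
    ext s
    simp only [Set.mem_setOf_eq, Finset.coe_filter, Finset.mem_range, hS]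
    constructor
    · rintro ⟨hmem, hlt⟩
      exact ⟨by omega, (mem_S_iff n s hn).mp hmem⟩
    · rintro ⟨hlt, hmem⟩
      exact ⟨(mem_S_iff n s hn).mpr hmem, by omega⟩
  calc Nat.card {s : ℕ // s ∈ S ∧ (s : ℤ) < j}
      = Set.ncard {s : ℕ | s ∈ S ∧ (s : ℤ) < j} := (Nat.card_coe_set_eq _)
    _ = cnt n j.toNat := by rw [hset, Set.ncard_coe_finset]; rfl

set_option maxHeartbeats 1000000 in
/-- The semigroup formula for `Υ` of the torus knot `T(n,n+1)` evaluates to the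
Ozsváth–Stipsicz–Szabó piecewise linear formula on `[2i/n, (2i+2)/n] ∩ [0,1]`. -/
theorem upsilon_Tnnplus1_formula (n : ℕ) (hn : 1 ≤ n)
    (S : Set ℕ) (hS : S = {s : ℕ | ∃ m k : ℕ, s = m * n + k * (n + 1)})
    (H : ℤ → ℝ) (hH : ∀ i : ℤ, H i = (Nat.card {s : ℕ // s ∈ S ∧ (s : ℤ) < i} : ℝ))
    (g : ℝ) (hg : g = ((n * (n - 1) / 2 : ℕ) : ℝ))
    (Υ : ℝ → ℝ)
    (hΥ : ∀ t ∈ Set.Icc (0 : ℝ) 1,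
      IsLeast {x : ℝ | ∃ i : ℤ, x = H i + (t / 2) * (g - i)} (-(Υ t) / 2)) :
    ∀ i : ℤ, 0 ≤ i → i ≤ (((n - 1) / 2 : ℕ) : ℤ) →
      ∀ t ∈ Set.Icc (2 * (i : ℝ) / n) ((2 * (i : ℝ) + 2) / n) ∩ Set.Icc (0 : ℝ) 1,
        Υ t = -(i : ℝ) * (i + 1) - (1 / 2) * n * ((n : ℝ) - 1 - 2 * i) * t := by
  intro i hi0 hi2 t ht
  obtain ⟨⟨htl, htr⟩, ht0, ht1⟩ := ht
  have hn0 : 0 < n := hn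
  set iN : ℕ := i.toNat with hiNdef
  have hiN : (iN : ℤ) = i := Int.toNat_of_nonneg hi0
  have hiNn : 2 * iN + 1 ≤ n := by omega
  have hnR : (0:ℝ) < (n:ℝ) := by exact_mod_cast hn0
  have hiR : ((iN : ℕ) : ℝ) = (i : ℝ) := by exact_mod_cast hiN
  have hHval : ∀ j : ℤ, H j = (cnt n j.toNat : ℝ) := fun j => by
    rw [hH j, Hcnt n hn0 S hS j]
  have htl' : 2 * (iN : ℝ) ≤ t * n := by
    rw [hiR]; exact (div_le_iff₀ hnR).mp htl
  have htr' : t * n ≤ 2 * (iN : ℝ) + 2 := by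
    rw [hiR]; exact (le_div_iff₀ hnR).mp htr
  set C : ℕ := cnt n (iN * n) with hCdef
  -- the candidate is the least element
  have hV : IsLeast {x : ℝ | ∃ j : ℤ, x = H j + (t / 2) * (g - j)}
      ((C : ℝ) + (t / 2) * (g - ((iN * n : ℕ) : ℝ))) := by
    constructor
    · refine ⟨((iN * n : ℕ) : ℤ), ?_⟩
      rw [hHval, Int.toNat_natCast]
      push_cast
      ring
    · rintro x ⟨j, rfl⟩
      rw [hHval j]
      rcases le_or_gt (((iN * n : ℕ) : ℤ)) j with hj | hj
      · -- j to the right of iN * n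
        set a : ℕ := (j - ((iN * n : ℕ) : ℤ)).toNat with hadef
        have haj : (a : ℤ) = j - ((iN * n : ℕ) : ℤ) := Int.toNat_of_nonneg (by omega)
        have hjt : j.toNat = iN * n + a := by omega
        have key : n * C + (iN + 1) * a ≤ n * cnt n (iN * n + a) := by
          have h1 := cnt_lower n iN hn0 (by omega) a
          have hq := Nat.div_add_mod a n
          have hblt : a % n < n := Nat.mod_lt _ hn0
          generalize hQ : a / n = q at h1 hq
          generalize hB : a % n = b at h1 hq hblt
          have h2 : (iN + 1) * b ≤ n * min b (iN + 1) := by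
            rcases le_total b (iN + 1) with h | h
            · rw [min_eq_left h]
              exact Nat.mul_le_mul_right b (by omega)
            · rw [min_eq_right h]
              calc (iN + 1) * b ≤ (iN + 1) * n := Nat.mul_le_mul_left _ (by omega)
                _ = n * (iN + 1) := by ring
          calc n * C + (iN + 1) * a
              = n * C + (iN + 1) * (n * q) + (iN + 1) * b := by rw [← hq]; ring
            _ ≤ n * C + (iN + 1) * (n * q) + n * min b (iN + 1) := by omega
            _ = n * (C + (iN + 1) * q + min b (iN + 1)) := by ring
            _ ≤ n * cnt n (iN * n + a) := Nat.mul_le_mul_left n h1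
        rw [hjt]
        have hkey : (n : ℝ) * C + ((iN : ℝ) + 1) * a ≤ n * (cnt n (iN * n + a) : ℝ) := by
          exact_mod_cast key
        have hja : (j : ℝ) = (iN : ℝ) * n + a := by
          have : j = ((iN * n + a : ℕ) : ℤ) := by omega
          rw [this]; push_cast; ring
        have ha0 : (0:ℝ) ≤ (a : ℝ) := Nat.cast_nonneg a
        have h5 : t * (n : ℝ) * a ≤ (2 * (iN : ℝ) + 2) * a :=
          mul_le_mul_of_nonneg_right htr' ha0
        have h6 : (n : ℝ) * (t / 2 * a) ≤ n * ((cnt n (iN * n + a) : ℝ) - C) := by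
          linarith [h5, hkey]
        have h7 : t / 2 * a ≤ (cnt n (iN * n + a) : ℝ) - C := le_of_mul_le_mul_left h6 hnR
        rw [hja]
        push_cast
        linarith [h7]
      · -- j to the left of iN * n
        set a : ℕ := (((iN * n : ℕ) : ℤ) - j).toNat with hadef
        have haj : (a : ℤ) = ((iN * n : ℕ) : ℤ) - j := Int.toNat_of_nonneg (by omega)
        have hjt : j.toNat = iN * n - a := by omega
        have key : n * C ≤ n * cnt n (iN * n - a) + iN * a := by
          have h1 := cnt_upper n iN hn0 (by omega) a
          have hq := Nat.div_add_mod a n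
          have hblt : a % n < n := Nat.mod_lt _ hn0
          generalize hQ : a / n = q at h1 hq
          generalize hB : a % n = b at h1 hq hblt
          have h2 : n * (b - (n - iN)) ≤ iN * b := by
            rcases le_or_gt b (n - iN) with h | h
            · have hz : b - (n - iN) = 0 := by omega
              rw [hz, Nat.mul_zero]
              exact Nat.zero_le _
            · have hbi : b - (n - iN) = b + iN - n := by omega
              rw [hbi]
              zify [show n ≤ b + iN by omega]
              nlinarith [mul_nonneg (sub_nonneg.mpr (show (iN:ℤ) ≤ (n:ℤ) by exact_mod_cast (by omega : iN ≤ n)))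
                (sub_nonneg.mpr (show (b:ℤ) ≤ (n:ℤ) by exact_mod_cast (by omega : b ≤ n)))]
          calc n * C ≤ n * (cnt n (iN * n - a) + iN * q + (b - (n - iN))) :=
                Nat.mul_le_mul_left n h1
            _ = n * cnt n (iN * n - a) + iN * (n * q) + n * (b - (n - iN)) := by ring
            _ ≤ n * cnt n (iN * n - a) + iN * (n * q) + iN * b := by omega
            _ = n * cnt n (iN * n - a) + iN * (n * q + b) := by ring
            _ = n * cnt n (iN * n - a) + iN * a := by rw [hq]
        rw [hjt]
        have hkey : (n : ℝ) * C ≤ n * (cnt n (iN * n - a) : ℝ) + iN * a := by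
          exact_mod_cast key
        have hja : (j : ℝ) = (iN : ℝ) * n - a := by
          have h9 : (j : ℝ) = (((iN * n : ℕ) : ℤ) : ℝ) - ((a : ℤ) : ℝ) := by
            rw [haj]; push_cast; ring
          rw [h9]; push_cast; ring
        have ha0 : (0:ℝ) ≤ (a : ℝ) := Nat.cast_nonneg a
        have h5 : (2 * (iN : ℝ)) * a ≤ t * (n : ℝ) * a :=
          mul_le_mul_of_nonneg_right htl' ha0
        have h6 : (n : ℝ) * ((C : ℝ) - cnt n (iN * n - a)) ≤ n * (t / 2 * a) := by
          linarith [h5, hkey]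
        have h7 : (C : ℝ) - cnt n (iN * n - a) ≤ t / 2 * a := le_of_mul_le_mul_left h6 hnR
        rw [hja]
        push_cast
        linarith [h7]
  have hEq : -(Υ t) / 2 = (C : ℝ) + (t / 2) * (g - ((iN * n : ℕ) : ℝ)) :=
    (hΥ t ⟨ht0, ht1⟩).unique hV
  have h2C : 2 * C = iN * (iN + 1) := by
    have h := cnt_formula n hn0 iN (by omega) 0 (by omega)
    simpa using h
  have h2g : 2 * g = (n : ℝ) * ((n : ℝ) - 1) := by
    rw [hg]
    have heven : 2 ∣ n * (n - 1) := by
      have h1 : n * (n - 1) = (n - 1) * (n - 1 + 1) := by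
        rw [Nat.sub_add_cancel hn]; ring
      rw [h1]
      exact (Nat.even_mul_succ_self (n - 1)).two_dvd
    have he : n * (n - 1) / 2 * 2 = n * (n - 1) := Nat.div_mul_cancel heven
    have hcast : ((n * (n - 1) / 2 : ℕ) : ℝ) * 2 = ((n * (n - 1) : ℕ) : ℝ) := by
      exact_mod_cast congrArg (Nat.cast : ℕ → ℝ) he
    have hsub : (((n - 1) : ℕ) : ℝ) = (n : ℝ) - 1 := by
      push_cast [Nat.cast_sub hn]; ring
    push_cast at hcast
    rw [hsub] at hcast
    linarith
  have hCr : (C : ℝ) = ((iN : ℝ) * ((iN : ℝ) + 1)) / 2 := by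
    have h := congrArg (Nat.cast : ℕ → ℝ) h2C
    push_cast at h
    linarith
  have hgr : g = (n : ℝ) * ((n : ℝ) - 1) / 2 := by linarith
  have hfin : Υ t = -2 * ((C : ℝ) + (t / 2) * (g - ((iN * n : ℕ) : ℝ))) := by linarith
  rw [hfin, hCr, hgr, ← hiR]
  push_cast
  ring
end

section
/- Let a < b be coprime positive integers, and write b = qa + r with 0 < r < a (q ≥ 1). Then for the semigroup counting functions, H_{T(a,b)}(i) = min_{j∈ℤ} ( H_{T(a,b-a)}(i-j) + H_{T(a,a+1)}(j) ) holds for all i ∈ ℤ, where H_{T(p,q)} denotes the counting function of the numerical semigroup generated by p and q. -/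
open Finset

/-- The counting function of the numerical semigroup generated by `p` and `q`. -/
noncomputable def semiCount (p q : ℕ) (i : ℤ) : ℤ :=
  Nat.card {s : ℕ // (∃ m k : ℕ, s = m * p + k * q) ∧ (s : ℤ) < i}

/-- `cld a x = ⌈x / a⌉` for `a > 0`. -/
def cld (a : ℕ) (x : ℤ) : ℤ := (x + a - 1) / a

/-- `fce a x = max ⌈x/a⌉ 0`, the number of naturals `m` with `a*m < x`. -/
def fce (a : ℕ) (x : ℤ) : ℤ := max (cld a x) 0





section cldlemmas
variable {a : ℕ}

lemma cld_add_mul (ha : 0 < a) (x Q : ℤ) : cld a (x + Q * a) = cld a x + Q := by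
  unfold cld
  have h : (a : ℤ) ≠ 0 := by exact_mod_cast ha.ne'
  rw [show x + Q * (a:ℤ) + a - 1 = (x + a - 1) + Q * a by ring, Int.add_mul_ediv_right _ _ h]

lemma cld_of_nonpos {x : ℤ} (h1 : -(a:ℤ) < x) (h2 : x ≤ 0) : cld a x = 0 := by
  unfold cld
  exact Int.ediv_eq_zero_of_lt (by omega) (by omega)

lemma cld_of_pos (ha : 0 < a) {x : ℤ} (h1 : 0 < x) (h2 : x ≤ a) : cld a x = 1 := by
  have h := cld_add_mul ha (x - a) 1
  rw [show x - (a:ℤ) + 1 * a = x by ring] at h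
  rw [h, cld_of_nonpos (by omega) (by omega)]; ring

lemma le_cld_iff (ha : 0 < a) {L x : ℤ} : L ≤ cld a x ↔ (L - 1) * a < x := by
  unfold cld
  rw [Int.le_ediv_iff_mul_le (by exact_mod_cast ha)]
  have hexp : (L - 1) * (a:ℤ) = L * a - a := by ring
  constructor <;> intro h <;> linarith

lemma cld_mono (ha : 0 < a) {x y : ℤ} (h : x ≤ y) : cld a x ≤ cld a y :=
  Int.ediv_le_ediv (by exact_mod_cast ha) (by omega)

lemma cld_nonpos (ha : 0 < a) {x : ℤ} (h2 : x ≤ 0) : cld a x ≤ 0 := by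
  by_contra h
  have h1 : (1 : ℤ) ≤ cld a x := by omega
  rw [le_cld_iff ha] at h1
  omega

lemma fce_nonneg (x : ℤ) : 0 ≤ fce a x := le_max_right _ _

lemma fce_mono (ha : 0 < a) {x y : ℤ} (h : x ≤ y) : fce a x ≤ fce a y :=
  max_le_max (cld_mono ha h) le_rfl

lemma fce_of_nonpos (ha : 0 < a) {x : ℤ} (h : x ≤ 0) : fce a x = 0 := by
  have h2 := cld_nonpos ha h
  unfold fce; omega

lemma le_fce (ha : 0 < a) {L x : ℤ} (h : (L - 1) * a < x) : L ≤ fce a x :=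
  le_trans ((le_cld_iff ha).2 h) (le_max_left _ _)

lemma one_le_fce (ha : 0 < a) {x : ℤ} (h : 0 < x) : 1 ≤ fce a x := le_fce ha (by omega)

/-- Evaluation: `fce a (L*a - κ) = max L 0` for `0 ≤ κ < a`. -/
lemma fce_mul_sub (ha : 0 < a) {L κ : ℤ} (h0 : 0 ≤ κ) (h1 : κ < a) :
    fce a (L * a - κ) = max L 0 := by
  have h : cld a (L * a - κ) = L := by
    have h2 := cld_add_mul ha (-κ) L
    rw [show -κ + L * (a:ℤ) = L * a - κ by ring] at h2
    rw [h2, cld_of_nonpos (by omega) (by omega)]; ring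
  unfold fce; rw [h]

/-- If `fce a x ≥ L ≥ 0` then `fce a (x - L*a) + L ≤ fce a x`. -/
lemma fce_sub_mul (ha : 0 < a) {L x : ℤ} (h0 : 0 ≤ L) (h : L ≤ fce a x) :
    fce a (x - L * a) + L ≤ fce a x := by
  have hc : cld a (x - L * a) = cld a x - L := by
    have h2 := cld_add_mul ha x (-L)
    rw [show x + -L * (a:ℤ) = x - L * a by ring] at h2
    rw [h2]; ring
  unfold fce at *
  omega

/-- Key superadditivity: `fce a (s+t) ≤ fce a s + fce a (t - ((-s) % a))`. -/
lemma fce_key (ha : 0 < a) (s t : ℤ) : fce a (s + t) ≤ fce a s + fce a (t - (-s) % a) := by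
  set φ := (-s) % a with hφ
  have haz : (a : ℤ) ≠ 0 := by exact_mod_cast ha.ne'
  have hφ0 : 0 ≤ φ := Int.emod_nonneg _ haz
  have hφa : φ < a := Int.emod_lt_of_pos _ (by exact_mod_cast ha)
  set Q : ℤ := -((-s) / a) with hQ
  have hsum : s + φ = Q * a := by
    have h := Int.emod_add_mul_ediv (-s) a
    rw [hφ, hQ]; linarith [h]
  have h1 : cld a s = Q := by
    have h2 := cld_add_mul ha (-φ) Q
    rw [show -φ + Q * (a:ℤ) = s by omega] at h2
    rw [h2, cld_of_nonpos (by omega) (by omega)]; ring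
  have h2 : cld a (s + t) = Q + cld a (t - φ) := by
    have h3 := cld_add_mul ha (t - φ) Q
    rw [show t - φ + Q * (a:ℤ) = s + t by omega] at h3
    rw [h3]; ring
  unfold fce
  rw [h1, h2]
  apply max_le
  · exact add_le_add (le_max_left _ _) (le_max_left _ _)
  · positivity

end cldlemmas




section bridge
variable {a : ℕ}

lemma rep_unique (ha : 0 < a) {d : ℕ} (hcd : Nat.Coprime a d)
    {m1 k1 m2 k2 : ℕ} (hk1 : k1 < a) (hk2 : k2 < a)
    (h : m1 * a + k1 * d = m2 * a + k2 * d) : m1 = m2 ∧ k1 = k2 := by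
  have hz : ((m1:ℤ) - m2) * a = ((k2:ℤ) - k1) * d := by
    have h' : ((m1:ℤ) * a + k1 * d) = ((m2:ℤ) * a + k2 * d) := by exact_mod_cast h
    linarith
  have hdvd : (a:ℤ) ∣ ((k2:ℤ) - k1) * d := ⟨(m1:ℤ) - m2, by linarith⟩
  have hcop : IsCoprime (a:ℤ) (d:ℤ) := by
    rw [Nat.isCoprime_iff_coprime]; exact hcd
  have hdk : (a:ℤ) ∣ ((k2:ℤ) - k1) := hcop.dvd_of_dvd_mul_right hdvd
  have hna : a ∣ ((k2:ℤ) - k1).natAbs := by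
    have h' := Int.natAbs_dvd_natAbs.mpr hdk
    simpa using h'
  have hlt : ((k2:ℤ) - k1).natAbs < a := by omega
  have h0 : ((k2:ℤ) - k1).natAbs = 0 := Nat.eq_zero_of_dvd_of_lt hna hlt
  have hk : k1 = k2 := by omega
  subst hk
  have hm : m1 * a = m2 * a := by omega
  exact ⟨Nat.eq_of_mul_eq_mul_right ha hm, rfl⟩

lemma semiCount_eq_sum (ha : 0 < a) {d : ℕ} (hd : 0 < d) (hcd : Nat.Coprime a d) (i : ℤ) :
    semiCount a d i = ∑ k ∈ range a, fce a (i - k * d) := by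
  classical
  have hiff : ∀ (k : ℕ) (m : ℕ), (((m * a + k * d : ℕ) : ℤ) < i) ↔ (m : ℤ) < cld a (i - k * d) := by
    intro k m
    have ha' : (0:ℤ) < a := by exact_mod_cast ha
    have h1 : (((m * a + k * d : ℕ) : ℤ) < i) ↔ (m:ℤ) * a ≤ i - k * d - 1 := by
      push_cast; constructor <;> intro h <;> linarith
    have h2 : (m:ℤ) * a ≤ i - k * d - 1 ↔ (m:ℤ) ≤ (i - k * d - 1) / a :=
      (Int.le_ediv_iff_mul_le ha').symm
    have h3 : cld a (i - k * d) = (i - k * d - 1) / a + 1 := by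
      unfold cld
      rw [show i - k * d + a - 1 = (i - k * d - 1) + 1 * a by ring,
        Int.add_mul_ediv_right _ _ (by exact_mod_cast ha.ne' : (a:ℤ) ≠ 0)]
    rw [h1, h2, h3]; omega
  -- the sigma equivalence
  let C : Fin a → Type := fun k => {m : ℕ // ((m * a + (k:ℕ) * d : ℕ) : ℤ) < i}
  let F : (Σ k : Fin a, C k) → {s : ℕ // (∃ m k : ℕ, s = m * a + k * d) ∧ (s : ℤ) < i} :=
    fun p => ⟨p.2.1 * a + (p.1 : ℕ) * d, ⟨p.2.1, p.1, rfl⟩, p.2.2⟩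
  have hFbij : Function.Bijective F := by
    constructor
    · rintro ⟨⟨k1, hk1⟩, ⟨m1, hm1⟩⟩ ⟨⟨k2, hk2⟩, ⟨m2, hm2⟩⟩ h
      have hv : m1 * a + k1 * d = m2 * a + k2 * d := congrArg Subtype.val h
      obtain ⟨hm, hk⟩ := rep_unique ha hcd hk1 hk2 hv
      subst hm; subst hk; rfl
    · rintro ⟨s, ⟨⟨m, k, hs⟩, hlt⟩⟩
      have hval : (m + k / a * d) * a + (k % a) * d = s := by
        rw [hs]
        have hdm : a * (k / a) + k % a = k := Nat.div_add_mod k a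
        calc (m + k / a * d) * a + (k % a) * d = m * a + (a * (k / a) + k % a) * d := by ring
          _ = m * a + k * d := by rw [hdm]
      refine ⟨⟨⟨k % a, Nat.mod_lt _ ha⟩, ⟨m + k / a * d, ?_⟩⟩, ?_⟩
      · show ((_ : ℕ) : ℤ) < i
        rw [hval]; exact hlt
      · exact Subtype.ext hval
  have e1 := (Equiv.ofBijective F hFbij).symm
  have e2 : (Σ k : Fin a, C k) ≃ (Σ k : Fin a, Fin ((cld a (i - k * d)).toNat)) := by
    refine Equiv.sigmaCongrRight (fun k => ?_)
    refine (Equiv.subtypeEquivRight (fun m => ?_)).trans (Fin.equivSubtype).symm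
    rw [hiff k m, Int.lt_toNat]
  rw [semiCount, Nat.card_congr (e1.trans e2), Nat.card_eq_fintype_card, Fintype.card_sigma]
  push_cast
  simp only [Fintype.card_fin]
  rw [Fin.sum_univ_eq_sum_range (fun k => (((cld a (i - k * d)).toNat : ℤ)))]
  refine Finset.sum_congr rfl (fun k _ => ?_)
  rw [Int.toNat_eq_max]
  rfl

end bridge



section p2
variable {a : ℕ}


/-- Cardinality invariance under the permutation `k ↦ (e + k*c) % a` of residues. -/
lemma perm_filter_card (ha : 0 < a) {c : ℤ} (hc : IsCoprime c (a:ℤ)) (e ρ : ℤ) :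
    ((range a).filter (fun k : ℕ => (e + (k:ℤ) * c) % a < ρ)).card
      = ((range a).filter (fun k : ℕ => (k:ℤ) < ρ)).card := by
  have ha' : (0:ℤ) < a := by exact_mod_cast ha
  have haz : (a:ℤ) ≠ 0 := ha'.ne'
  obtain ⟨u, v, huv⟩ := id hc
  have hcomp : ∀ s : ℕ, s < a →
      (e + ((((s:ℤ) - e) * u % a)) * c) % a = s := by
    intro s hsa
    have m0 : (((s:ℤ) - e) * u % a) ≡ ((s:ℤ) - e) * u [ZMOD (a:ℤ)] :=
      Int.emod_emod_of_dvd _ dvd_rfl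
    have m1 : (((s:ℤ) - e) * u % a) * c ≡ (((s:ℤ) - e) * u) * c [ZMOD (a:ℤ)] :=
      Int.ModEq.mul_right c m0
    have h1c : (1:ℤ) - u * c = v * a := by linarith
    have m2 : (((s:ℤ) - e) * u) * c ≡ (s:ℤ) - e [ZMOD (a:ℤ)] := by
      rw [Int.modEq_iff_dvd]
      exact ⟨((s:ℤ) - e) * v, by linear_combination ((s:ℤ) - e) * h1c⟩
    have m3 : e + (((s:ℤ) - e) * u % a) * c ≡ e + ((s:ℤ) - e) [ZMOD (a:ℤ)] :=
      (m1.trans m2).add_left e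
    have h4 : (e + (((s:ℤ) - e) * u % a) * c) % a = (e + ((s:ℤ) - e)) % a := m3
    rw [h4, show e + ((s:ℤ) - e) = (s:ℤ) by ring]
    exact Int.emod_eq_of_lt (Int.natCast_nonneg s) (by exact_mod_cast hsa)
  refine Finset.card_bij (fun k _ => ((e + (k:ℤ) * c) % a).toNat) ?_ ?_ ?_
  · intro k hk
    simp only [mem_filter, mem_range] at hk ⊢
    have h0 := Int.emod_nonneg (e + (k:ℤ) * c) haz
    have h1 := Int.emod_lt_of_pos (e + (k:ℤ) * c) ha'
    refine ⟨by omega, ?_⟩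
    rw [Int.toNat_of_nonneg h0]; exact hk.2
  · intro k1 hk1 k2 hk2 h
    replace h : ((e + (k1:ℤ) * c) % a).toNat = ((e + (k2:ℤ) * c) % a).toNat := h
    simp only [mem_filter, mem_range] at hk1 hk2
    have h0 := Int.emod_nonneg (e + (k1:ℤ) * c) haz
    have h0' := Int.emod_nonneg (e + (k2:ℤ) * c) haz
    have heq : (e + (k1:ℤ) * c) % a = (e + (k2:ℤ) * c) % a := by omega
    have hmod : (e + (k1:ℤ) * c) ≡ (e + (k2:ℤ) * c) [ZMOD (a:ℤ)] := heq
    have hdvd : (a:ℤ) ∣ ((k2:ℤ) - k1) * c := by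
      have h2 := Int.ModEq.dvd hmod
      have h3 : (e + (k2:ℤ) * c) - (e + (k1:ℤ) * c) = ((k2:ℤ) - k1) * c := by ring
      rwa [h3] at h2
    have hdk : (a:ℤ) ∣ ((k2:ℤ) - k1) := (hc.symm).dvd_of_dvd_mul_right hdvd
    have hna : a ∣ ((k2:ℤ) - k1).natAbs := by
      have h' := Int.natAbs_dvd_natAbs.mpr hdk
      simpa using h'
    have h0'' : ((k2:ℤ) - k1).natAbs = 0 := Nat.eq_zero_of_dvd_of_lt hna (by omega)
    omega
  · intro s hs
    simp only [mem_filter, mem_range] at hs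
    set w : ℤ := ((s:ℤ) - e) * u % a with hw
    have hw0 : 0 ≤ w := Int.emod_nonneg _ haz
    have hwa : w < a := Int.emod_lt_of_pos _ ha'
    have hc2 : (e + ((w.toNat : ℤ)) * c) % a = s := by
      rw [Int.toNat_of_nonneg hw0]; exact hcomp s hs.1
    refine ⟨w.toNat, ?_, ?_⟩
    · simp only [mem_filter, mem_range]
      refine ⟨by omega, ?_⟩
      rw [hc2]; exact hs.2
    · show ((e + ((w.toNat : ℤ)) * c) % ↑a).toNat = s
      omega
  
/-- Two-value evaluation of `fce a (j - k*a - s)` for an offset `s ∈ [0,a)`. -/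
lemma fce_eval (ha : 0 < a) (j k s : ℤ) (h0 : 0 ≤ s) (h1 : s < a) :
    fce a (j - k * a - s)
      = max (cld a j - 1 - k + (if s < j - a * (cld a j - 1) then 1 else 0)) 0 := by
  set G := cld a j with hG
  set ρ := j - a * (G - 1) with hρ
  have hρ1 : 1 ≤ ρ := by
    have h2 := (le_cld_iff ha (L := G) (x := j)).mp le_rfl
    rw [hρ]; nlinarith
  have hρa : ρ ≤ a := by
    have h2 := mt (le_cld_iff ha (L := G + 1) (x := j)).mpr (by omega)
    rw [hρ]; nlinarith
  have hdecomp : j - k * a - s = (ρ - s) + (G - 1 - k) * a := by rw [hρ]; ring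
  have hcld : cld a (j - k * a - s) = cld a (ρ - s) + (G - 1 - k) := by
    rw [hdecomp, cld_add_mul ha]
  have hsmall : cld a (ρ - s) = if s < ρ then 1 else 0 := by
    split_ifs with h
    · exact cld_of_pos ha (by omega) (by omega)
    · exact cld_of_nonpos (by omega) (by omega)
  unfold fce
  rw [hcld, hsmall]
  split_ifs <;> ring_nf

lemma max_ind' (y : ℤ) (q : Prop) [Decidable q] :
    max (y + (if q then 1 else 0)) 0 = max y 0 + (if q ∧ 0 ≤ y then 1 else 0) := by
  rw [← Int.toNat_eq_max, ← Int.toNat_eq_max]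
  by_cases hq : q <;>
    simp only [hq, true_and, false_and, if_true, if_false, add_zero] <;>
    split_ifs <;> omega

/-- Rearrangement inequality for the sum. -/
lemma rearrange (ha : 0 < a) {c : ℤ} (hc : IsCoprime c (a:ℤ)) (e j : ℤ) :
    ∑ k ∈ range a, fce a (j - k * a - (e + k * c) % a)
      ≤ ∑ k ∈ range a, fce a (j - k * a - k) := by
  have ha' : (0:ℤ) < a := by exact_mod_cast ha
  have haz : (a:ℤ) ≠ 0 := ha'.ne'
  set G := cld a j with hG
  set ρ := j - a * (G - 1) with hρ
  classical
  have hL : ∀ k ∈ range a,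
      fce a (j - k * a - (e + k * c) % a)
        = max (G - 1 - k) 0 + (if ((e + (k:ℤ) * c) % a < ρ ∧ 0 ≤ G - 1 - (k:ℤ)) then 1 else 0) := by
    intro k _
    rw [fce_eval ha j k _ (Int.emod_nonneg _ haz) (Int.emod_lt_of_pos _ ha'), max_ind']
  have hR : ∀ k ∈ range a,
      fce a (j - k * a - k)
        = max (G - 1 - k) 0 + (if ((k:ℤ) < ρ ∧ 0 ≤ G - 1 - (k:ℤ)) then 1 else 0) := by
    intro k hk
    simp only [mem_range] at hk
    rw [fce_eval ha j k k (by exact_mod_cast Nat.zero_le k) (by exact_mod_cast hk), max_ind']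
  rw [Finset.sum_congr rfl hL, Finset.sum_congr rfl hR,
    Finset.sum_add_distrib, Finset.sum_add_distrib]
  refine add_le_add le_rfl ?_
  rw [Finset.sum_boole, Finset.sum_boole]
  have hcard : ((range a).filter (fun k : ℕ => (e + (k:ℤ) * c) % a < ρ ∧ 0 ≤ G - 1 - (k:ℤ))).card
      ≤ ((range a).filter (fun k : ℕ => (k:ℤ) < ρ ∧ 0 ≤ G - 1 - (k:ℤ))).card := by
    rcases le_total ρ G with hρG | hGρ
    · have hRf : ((range a).filter (fun k : ℕ => (k:ℤ) < ρ ∧ 0 ≤ G - 1 - (k:ℤ)))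
          = ((range a).filter (fun k : ℕ => (k:ℤ) < ρ)) := by
        apply Finset.filter_congr
        intro k _
        constructor
        · intro h; exact h.1
        · intro h; exact ⟨h, by omega⟩
      rw [hRf, ← perm_filter_card ha hc e ρ]
      apply Finset.card_le_card
      intro k hk
      simp only [mem_filter] at hk ⊢
      exact ⟨hk.1, hk.2.1⟩
    · apply Finset.card_le_card
      intro k hk
      simp only [mem_filter] at hk ⊢
      exact ⟨hk.1, by omega, hk.2.2⟩
  exact_mod_cast hcard

/-- Part II: the lower bound, at the level of `fce`-sums. -/
lemma sum_lower (ha : 0 < a) {c : ℤ} (hc : IsCoprime c (a:ℤ)) (i j : ℤ) :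
    ∑ k ∈ range a, fce a (i - k * (a + c)) ≤
      (∑ k ∈ range a, fce a (i - j - k * c)) + ∑ k ∈ range a, fce a (j - k * (a + 1)) := by
  have step1 : ∑ k ∈ range a, fce a (i - k * (a + c)) ≤
      (∑ k ∈ range a, fce a (i - j - k * c)) +
        ∑ k ∈ range a, fce a (j - k * a - ((j - i) + k * c) % a) := by
    rw [← Finset.sum_add_distrib]
    apply Finset.sum_le_sum
    intro k _
    have h := fce_key ha (i - j - k * c) (j - (k:ℤ) * a)
    rw [show (i - j - (k:ℤ) * c) + (j - k * a) = i - k * (a + c) by ring] at h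
    rw [show -(i - j - (k:ℤ) * c) = (j - i) + k * c by ring] at h
    calc fce a (i - (k:ℤ) * (a + c)) ≤ _ := h
      _ = _ := by rw [show j - (k:ℤ) * a - ((j - i) + k * c) % a = j - k*a - ((j-i) + k*c) % a by ring]
  refine le_trans step1 ?_
  refine add_le_add le_rfl ?_
  have h2 := rearrange ha hc (j - i) j
  refine le_trans h2 ?_
  apply Finset.sum_le_sum
  intro k _
  rw [show j - (k:ℤ) * (a + 1) = j - k * a - k by ring]

end p2




section p3
variable {a : ℕ}

lemma semiCount_of_nonpos (p q : ℕ) {i : ℤ} (h : i ≤ 0) : semiCount p q i = 0 := by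
  have he : IsEmpty {s : ℕ // (∃ m k : ℕ, s = m * p + k * q) ∧ (s : ℤ) < i} := by
    refine ⟨fun x => ?_⟩
    have h1 := x.2.2
    have h2 : (0:ℤ) ≤ (x.1 : ℤ) := Int.natCast_nonneg _
    omega
  rw [semiCount, Nat.card_of_isEmpty]
  rfl

/-- The witness inequality. -/
lemma witness_le (ha : 0 < a) {b : ℕ} (hab : a < b) (hcop : Nat.Coprime a b) (i : ℤ) :
    ∃ j : ℤ, semiCount a (b - a) (i - j) + semiCount a (a + 1) j ≤ semiCount a b i := by
  classical
  have hb : 0 < b := lt_trans ha hab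
  have hb' : (0:ℤ) < b := by exact_mod_cast hb
  have ha' : (0:ℤ) < a := by exact_mod_cast ha
  have hab' : (a:ℤ) < b := by exact_mod_cast hab
  have hcop1 : Nat.Coprime a (b - a) := by
    have hd1 : Nat.gcd a (b - a) ∣ b := by
      have := Nat.dvd_add (Nat.gcd_dvd_right a (b - a)) (Nat.gcd_dvd_left a (b - a))
      rwa [Nat.sub_add_cancel hab.le] at this
    have hd2 : Nat.gcd a (b - a) ∣ Nat.gcd a b := Nat.dvd_gcd (Nat.gcd_dvd_left _ _) hd1
    rw [hcop] at hd2
    exact Nat.dvd_one.mp hd2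
  have hcop2 : Nat.Coprime a (a + 1) := by
    have h1 := Nat.gcd_dvd_left a (a+1)
    have h2 := Nat.gcd_dvd_right a (a+1)
    have h3 : Nat.gcd a (a+1) ∣ 1 := by
      have h4 := Nat.dvd_sub h2 h1
      simpa using h4
    exact Nat.dvd_one.mp h3
  have hc0 : 0 < b - a := by omega
  have hcast : ((b - a : ℕ) : ℤ) = (b:ℤ) - a := by push_cast [hab.le]; ring
  set c' : ℤ := (b:ℤ) - a with hc'
  rcases le_or_gt i 0 with hi | hi
  · exact ⟨0, by
      rw [semiCount_of_nonpos _ _ (by omega : i - 0 ≤ 0), semiCount_of_nonpos _ _ le_rfl]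
      have : (0:ℤ) ≤ semiCount a b i := by
        rw [semiCount_eq_sum ha hb hcop i]
        exact Finset.sum_nonneg fun k _ => fce_nonneg _
      omega⟩
  -- minimal semigroup element ≥ i
  have hP : ∃ s : ℕ, (∃ m k : ℕ, s = m * a + k * b) ∧ i ≤ (s:ℤ) := by
    refine ⟨i.toNat * a, ⟨i.toNat, 0, by ring⟩, ?_⟩
    push_cast
    nlinarith [Int.toNat_of_nonneg hi.le]
  obtain ⟨s, ⟨⟨m0, k0, hs0⟩, his⟩, hmin⟩ :
      ∃ s : ℕ, ((∃ m k : ℕ, s = m * a + k * b) ∧ i ≤ (s:ℤ)) ∧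
        ∀ x : ℕ, x < s → ¬((∃ m k : ℕ, x = m * a + k * b) ∧ i ≤ (x:ℤ)) :=
    ⟨Nat.find hP, Nat.find_spec hP, fun x hx => Nat.find_min hP hx⟩
  clear hP
  -- canonical representation with k < a
  obtain ⟨m, k, hk, hs⟩ : ∃ m k : ℕ, k < a ∧ s = m * a + k * b := by
    obtain ⟨q0, r0, hr0, hqr⟩ : ∃ q0 r0 : ℕ, r0 < a ∧ k0 = a * q0 + r0 :=
      ⟨k0 / a, k0 % a, Nat.mod_lt _ ha, (Nat.div_add_mod k0 a).symm⟩
    exact ⟨m0 + q0 * b, r0, hr0, by rw [hs0, hqr]; ring⟩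
  -- the pivot K
  obtain ⟨K₀, hK1, hK2⟩ : ∃ K₀ : ℤ, K₀ * b - a < (s:ℤ) ∧ (s:ℤ) ≤ K₀ * b + c' := by
    refine ⟨cld b ((s:ℤ) - c'), ?_, ?_⟩
    · have h2 := (le_cld_iff hb (L := cld b ((s:ℤ) - c')) (x := (s:ℤ) - c')).mp le_rfl
      have hexp : (cld b ((s:ℤ) - c') - 1) * (b:ℤ) = cld b ((s:ℤ) - c') * b - b := by ring
      rw [hc'] at *; linarith
    · have h2 := mt (le_cld_iff hb (L := cld b ((s:ℤ) - c') + 1) (x := (s:ℤ) - c')).mpr (by omega)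
      push_neg at h2
      have hexp : (cld b ((s:ℤ) - c') + 1 - 1) * (b:ℤ) = cld b ((s:ℤ) - c') * b := by ring
      linarith [hexp ▸ h2]
  have hsval : (s:ℤ) = m * a + k * b := by exact_mod_cast hs
  have hkK : (k:ℤ) ≤ K₀ := by
    by_contra hcon
    push_neg at hcon
    have h1 : (K₀ + 1) * b ≤ (k:ℤ) * b := mul_le_mul_of_nonneg_right (by omega) hb'.le
    have h2 : (k:ℤ) * b ≤ (s:ℤ) := by
      rw [hsval]; linarith [mul_nonneg (Int.natCast_nonneg m) ha'.le]
    have hexp : (K₀ + 1) * (b:ℤ) = K₀ * b + b := by ring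
    linarith [hK2]
  have hKmk : K₀ ≤ (m:ℤ) + k := by
    by_contra hcon
    push_neg at hcon
    have h1 : ((m:ℤ) + k + 1) * b ≤ K₀ * b := mul_le_mul_of_nonneg_right (by omega) hb'.le
    have h2 : (0:ℤ) ≤ (m:ℤ) * ((b:ℤ) - a) := mul_nonneg (Int.natCast_nonneg m) (by omega)
    rw [hsval] at hK1
    have e4 : ((m:ℤ) + k + 1) * b = m * b + k * b + b := by ring
    have e5 : (m:ℤ) * ((b:ℤ) - a) = m * b - m * a := by ring
    linarith
  obtain ⟨K, hK0, hKa, hKK₀, hkltK, hKor⟩ :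
      ∃ K : ℤ, 0 ≤ K ∧ K ≤ (a:ℤ) - 1 ∧ K ≤ K₀ ∧ (k:ℤ) ≤ K ∧ (K = K₀ ∨ K = (a:ℤ) - 1) := by
    rcases le_total K₀ ((a:ℤ) - 1) with h | h
    · exact ⟨K₀, le_trans (Int.natCast_nonneg k) hkK, h, le_rfl, hkK, Or.inl rfl⟩
    · exact ⟨(a:ℤ) - 1, by omega, le_rfl, h, by omega, Or.inr rfl⟩
  refine ⟨K * a, ?_⟩
  -- termwise inequality at s
  have hterm : ∀ κ ∈ range a,
      fce a ((s:ℤ) - K * a - κ * c') + fce a (K * a - κ * ((a:ℤ) + 1))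
        ≤ fce a ((s:ℤ) - κ * b) := by
    intro κ hκ
    simp only [mem_range] at hκ
    have hκa : (κ:ℤ) < a := by exact_mod_cast hκ
    have hκ0 : (0:ℤ) ≤ κ := Int.natCast_nonneg κ
    have hev : fce a (K * a - κ * ((a:ℤ) + 1)) = max (K - κ) 0 := by
      rw [show K * (a:ℤ) - κ * (a + 1) = (K - κ) * a - κ by ring]
      exact fce_mul_sub ha hκ0 hκa
    rw [hev]
    rcases le_or_gt (κ:ℤ) K with hle | hgt
    · have hmax : max (K - (κ:ℤ)) 0 = K - κ := max_eq_left (by omega)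
      rw [hmax]
      have hP1 : K - (κ:ℤ) ≤ fce a ((s:ℤ) - κ * b) := by
        apply le_fce ha
        have h1 : K * (b:ℤ) ≤ K₀ * b := mul_le_mul_of_nonneg_right hKK₀ hb'.le
        have h2 : (K - κ) * (a:ℤ) ≤ (K - κ) * b := mul_le_mul_of_nonneg_left hab'.le (by omega)
        have e1 : (K - κ - 1) * (a:ℤ) = (K - κ) * a - a := by ring
        have e2 : (K - (κ:ℤ)) * b = K * b - κ * b := by ring
        linarith
      have h3 := fce_sub_mul ha (by omega : (0:ℤ) ≤ K - κ) hP1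
      rw [show (s:ℤ) - κ * b - (K - κ) * a = (s:ℤ) - K * a - κ * c' by rw [hc']; ring] at h3
      omega
    · have hmax : max (K - (κ:ℤ)) 0 = 0 := max_eq_right (by omega)
      rw [hmax, add_zero]
      have hz : (s:ℤ) - K * a - κ * c' ≤ 0 := by
        have hKeq : K = K₀ := by
          rcases hKor with h | h
          · exact h
          · exfalso; omega
        have hKb : K * (b:ℤ) = K * a + K * c' := by rw [hc']; ring
        have hκc : (K + 1) * c' ≤ κ * c' := mul_le_mul_of_nonneg_right (by omega) (by omega)
        have e3 : (K + 1) * c' = K * c' + c' := by ring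
        rw [hKeq] at hKb hκc e3 ⊢
        linarith [hK2]
      rw [fce_of_nonpos ha hz]
      exact fce_nonneg _
  -- sum it up
  have hsum : semiCount a (b - a) ((s:ℤ) - K * a) + semiCount a (a + 1) (K * a)
      ≤ semiCount a b (s:ℤ) := by
    rw [semiCount_eq_sum ha hc0 hcop1, semiCount_eq_sum ha (by omega : 0 < a + 1) hcop2,
      semiCount_eq_sum ha hb hcop]
    rw [← Finset.sum_add_distrib]
    apply Finset.sum_le_sum
    intro κ hκ
    have := hterm κ hκ
    rw [hcast]
    push_cast
    convert this using 3 <;> push_cast <;> ring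
  -- H(i) = H(s)
  have hHeq : semiCount a b i = semiCount a b (s:ℤ) := by
    rw [semiCount, semiCount]
    congr 1
    apply Nat.card_congr
    apply Equiv.subtypeEquivRight
    intro x
    constructor
    · rintro ⟨hx1, hx2⟩
      exact ⟨hx1, by omega⟩
    · rintro ⟨hx1, hx2⟩
      refine ⟨hx1, ?_⟩
      by_contra hcon
      push_neg at hcon
      have hxs : x < s := by exact_mod_cast hx2
      exact hmin x hxs ⟨hx1, hcon⟩
  -- monotonicity in i
  have hmono : semiCount a (b - a) (i - K * a) ≤ semiCount a (b - a) ((s:ℤ) - K * a) := by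
    rw [semiCount_eq_sum ha hc0 hcop1, semiCount_eq_sum ha hc0 hcop1]
    exact Finset.sum_le_sum fun κ _ => fce_mono ha (by omega)
  rw [hHeq]
  omega

end p3


section final
variable {a b : ℕ}

lemma coprime_sub (hab : a < b) (hcop : Nat.Coprime a b) : Nat.Coprime a (b - a) := by
  have hd1 : Nat.gcd a (b - a) ∣ b := by
    have h := Nat.dvd_add (Nat.gcd_dvd_right a (b - a)) (Nat.gcd_dvd_left a (b - a))
    rwa [Nat.sub_add_cancel hab.le] at h
  have hd2 : Nat.gcd a (b - a) ∣ Nat.gcd a b := Nat.dvd_gcd (Nat.gcd_dvd_left _ _) hd1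
  rw [hcop] at hd2
  exact Nat.dvd_one.mp hd2

/-- Part II at the `semiCount` level. -/
lemma semiCount_le (ha : 0 < a) (hab : a < b) (hcop : Nat.Coprime a b) (i j : ℤ) :
    semiCount a b i ≤ semiCount a (b - a) (i - j) + semiCount a (a + 1) j := by
  have hb : 0 < b := lt_trans ha hab
  have hcop1 := coprime_sub hab hcop
  have hcop2 : Nat.Coprime a (a + 1) := by
    have h1 := Nat.gcd_dvd_left a (a+1)
    have h2 := Nat.gcd_dvd_right a (a+1)
    have h3 : Nat.gcd a (a+1) ∣ 1 := by
      have h4 := Nat.dvd_sub h2 h1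
      simpa using h4
    exact Nat.dvd_one.mp h3
  have hcast : ((b - a : ℕ) : ℤ) = (b:ℤ) - a := by push_cast [hab.le]; ring
  rw [semiCount_eq_sum ha hb hcop i, semiCount_eq_sum ha (by omega : 0 < b - a) hcop1 (i - j),
    semiCount_eq_sum ha (by omega : 0 < a + 1) hcop2 j]
  have hcsub : IsCoprime ((b:ℤ) - a) (a:ℤ) := by
    have h := Nat.isCoprime_iff_coprime.mpr hcop1.symm
    rwa [hcast] at h
  have h := sum_lower ha hcsub i j
  calc ∑ k ∈ range a, fce a (i - k * b)
      = ∑ k ∈ range a, fce a (i - k * ((a:ℤ) + ((b:ℤ) - a))) := by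
        refine Finset.sum_congr rfl fun k _ => ?_
        congr 1; ring
    _ ≤ (∑ k ∈ range a, fce a (i - j - k * ((b:ℤ) - a)))
        + ∑ k ∈ range a, fce a (j - k * ((a:ℤ) + 1)) := h
    _ = (∑ k ∈ range a, fce a (i - j - k * ((b - a : ℕ) : ℤ)))
        + ∑ k ∈ range a, fce a (j - k * ((a + 1 : ℕ) : ℤ)) := by
        congr 1 <;> refine Finset.sum_congr rfl fun k _ => ?_ <;> congr 1 <;>
          push_cast [hcast] <;> ring

end final

/-- Blowup relation (Bodnár–Némethi) for semigroups of torus knot singularities: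
for coprime `a < b` with `b = q a + r`, `0 < r < a`, the counting function of the
semigroup of `T(a,b)` is the min-convolution of those of `T(a,b-a)` and `T(a,a+1)`. -/
theorem semigroup_counting_blowup (a b : ℕ) (ha : 0 < a) (hab : a < b)
    (hcop : Nat.Coprime a b) (q r : ℕ) (hq : 1 ≤ q) (hb : b = q * a + r)
    (hr : 0 < r) (hra : r < a) :
    ∀ i : ℤ, IsLeast
      {x : ℤ | ∃ j : ℤ, x = semiCount a (b - a) (i - j) + semiCount a (a + 1) j}
      (semiCount a b i) := by
  intro i
  constructor
  · obtain ⟨j, hj⟩ := witness_le ha hab hcop i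
    exact ⟨j, le_antisymm (semiCount_le ha hab hcop i j) hj⟩
  · rintro x ⟨j, rfl⟩
    exact semiCount_le ha hab hcop i j
end

section
/- Define for coprime positive integers a ≤ b the function U(a,b) : [0,1] → ℝ recursively by U(1,b)(t) = 0, U(a,b)(t) = U(a,b-a)(t) + U(a,a+1)(t) for a < b (interpreting U(a,r) for r < a as U(r,a)), where U(n,n+1)(t) = -i(i+1) - (1/2)n(n-1-2i)t for t ∈ [2i/n,(2i+2)/n]. Then U(a,b)(t) = Σ_{i≥0} q_i · U(r_i, r_i + 1)(t), where q_i, r_i are the quotients and remainders of the Euclidean algorithm for b and a (r_0 = a, r_{-1} = b, r_{i-1} = q_i r_i + r_{i+1}). -/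
/-- The Ozsváth–Stipsicz–Szabó formula for `Υ_{T(n,n+1)}(t)`, written using
`i = ⌊n t / 2⌋` (which equals the piecewise formula on each `[2i/n, (2i+2)/n]`). -/
noncomputable def upsNN (n : ℕ) (t : ℝ) : ℝ :=
  -((⌊(n : ℝ) * t / 2⌋ : ℤ) : ℝ) * (((⌊(n : ℝ) * t / 2⌋ : ℤ) : ℝ) + 1)
    - (1 / 2) * n * ((n : ℝ) - 1 - 2 * ((⌊(n : ℝ) * t / 2⌋ : ℤ) : ℝ)) * t

/-- The Euclidean-algorithm sum `Σ_i q_i · Υ_{T(r_i, r_i+1)}(t)`. -/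
noncomputable def euclidUps (a b : ℕ) (t : ℝ) : ℝ :=
  if h : a ≤ 1 then 0
  else ((b / a : ℕ) : ℝ) * upsNN a t + euclidUps (b % a) a t
termination_by a
decreasing_by exact Nat.mod_lt _ (by omega)

/-- Euclidean-algorithm expansion of the Upsilon function of torus knots: if
`U` satisfies `U(1,b) = 0`, `U(a,b) = U(b,a)` for `b < a`, and the blowup recursion
`U(a,b) = U(a,b-a) + Υ_{T(a,a+1)}` for `1 < a < b`, then `U(a,b)` equals the
Euclidean-algorithm sum `Σ_i q_i · Υ_{T(r_i, r_i+1)}`. -/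
theorem upsilon_torus_euclid (U : ℕ → ℕ → ℝ → ℝ)
    (hbase : ∀ b : ℕ, ∀ t : ℝ, U 1 b t = 0)
    (hsym : ∀ a b : ℕ, b < a → ∀ t : ℝ, U a b t = U b a t)
    (hrec : ∀ a b : ℕ, 1 < a → a < b → ∀ t : ℝ, U a b t = U a (b - a) t + upsNN a t) :
    ∀ a b : ℕ, 0 < a → a ≤ b → Nat.Coprime a b →
      ∀ t ∈ Set.Icc (0 : ℝ) 1, U a b t = euclidUps a b t := by
  suffices h : ∀ n a b, a + b ≤ n → 0 < a → a ≤ b → Nat.Coprime a b →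
      ∀ t ∈ Set.Icc (0 : ℝ) 1, U a b t = euclidUps a b t by
    intro a b; exact h (a + b) a b le_rfl
  intro n
  induction n with
  | zero => intro a b h ha; omega
  | succ n IH =>
    intro a b hab ha hle hcop t ht
    rcases eq_or_lt_of_le (show 1 ≤ a from ha) with h1 | h1
    · subst h1
      rw [hbase, euclidUps]
      simp
    · have hab' : a < b := by
        rcases lt_or_eq_of_le hle with h | h
        · exact h
        · exfalso; subst h
          have := (Nat.coprime_self a).mp hcop
          omega
      have hcop' : Nat.Coprime a (b - a) :=
        (Nat.coprime_sub_self_right hle).mpr hcop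
      rw [hrec a b h1 hab' t]
      have hna : ¬ a ≤ 1 := by omega
      rcases lt_trichotomy (b - a) a with hlt | heq | hgt
      · -- b - a < a, so b % a = b - a, b / a = 1
        have hmod : b % a = b - a := by
          rw [Nat.mod_eq_sub_mod hle, Nat.mod_eq_of_lt hlt]
        have hdiv : b / a = 1 :=
          Nat.div_eq_of_lt_le (by omega) (by omega)
        have hU : U a (b - a) t = U (b - a) a t := hsym a (b - a) hlt t
        have hU2 : U (b - a) a t = euclidUps (b - a) a t :=
          IH (b - a) a (by omega) (by omega) (le_of_lt hlt)
            ((Nat.coprime_comm).mp hcop') t ht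
        rw [hU, hU2]
        conv_rhs => rw [euclidUps]
        rw [dif_neg hna, hdiv, hmod]
        push_cast
        ring
      · exfalso
        have hb : b = 2 * a := by omega
        have hd : a ∣ b := ⟨2, by omega⟩
        have := Nat.Coprime.eq_one_of_dvd hcop hd
        omega
      · -- a < b - a
        have hU : U a (b - a) t = euclidUps a (b - a) t :=
          IH a (b - a) (by omega) ha (le_of_lt hgt) hcop' t ht
        rw [hU]
        conv_rhs => rw [euclidUps]
        conv_lhs => rw [euclidUps]
        rw [dif_neg hna, dif_neg hna]
        have hb : b = a + (b - a) := by omega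
        rw [hb, Nat.add_sub_cancel_left, Nat.add_div_left _ ha, Nat.add_mod_left]
        push_cast
        ring
end

section
/- Let a < b be two coprime positive integers with a ≥ 2, and write b = qa + r with 0 ≤ r < a. Then the Upsilon function of the torus knot T(a,b), defined recursively by Υ_{T(a,b)} = Υ_{T(a,b-a)} + Υ_{T(a,a+1)} with base cases Υ_{T(1,m)} = 0 and the explicit formula for Υ_{T(n,n+1)}, satisfies: Υ_{T(a,b)}(t) = -t·g₄(T(a,b)) for t ∈ [0, 2/a], where g₄(T(a,b)) = (a-1)(b-1)/2, and Υ_{T(a,b)}(t) ≥ -t·g₄(T(a,b)) + ⌊b/a⌋·(at - 2) for t ∈ (2/a, 1]. -/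
/-- The Upsilon function of the torus knot `T(a,b)`, defined by the blowup recursion
`Υ_{T(a,b)} = Υ_{T(a,b-a)} + Υ_{T(a,a+1)}` with `Υ_{T(1,m)} = 0`
(unrolled: `Υ_{T(a,b)} = ⌊b/a⌋ · Υ_{T(a,a+1)} + Υ_{T(b mod a, a)}`). -/
noncomputable def upsTorus (a b : ℕ) (t : ℝ) : ℝ :=
  if h : a ≤ 1 then 0
  else ((b / a : ℕ) : ℝ) * upsNN a t + upsTorus (b % a) a t
termination_by a
decreasing_by exact Nat.mod_lt _ (by omega)


lemma upsNN_eq (n : ℕ) (hn : 2 ≤ n) (t : ℝ) (ht0 : 0 ≤ t) (ht1 : t ≤ 2 / n) :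
    upsNN n t = -t * ((n : ℝ) * ((n : ℝ) - 1) / 2) := by
  have hnpos : (0:ℝ) < n := by positivity
  have hle : (n : ℝ) * t / 2 ≤ 1 := by
    rw [div_le_one (by norm_num)]
    calc (n:ℝ) * t ≤ (n:ℝ) * (2 / n) := by
          exact mul_le_mul_of_nonneg_left ht1 (le_of_lt hnpos)
      _ = 2 := by field_simp
  have h0 : (0:ℤ) ≤ ⌊(n : ℝ) * t / 2⌋ := Int.floor_nonneg.2 (by positivity)
  have h1 : ⌊(n : ℝ) * t / 2⌋ ≤ 1 := by
    have := Int.floor_le_floor hle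
    simpa using this
  unfold upsNN
  interval_cases h : ⌊(n : ℝ) * t / 2⌋
  · push_cast; ring
  · have h2 : 1 ≤ (n : ℝ) * t / 2 := by
      have := Int.floor_le ((n : ℝ) * t / 2)
      rw [h] at this; exact_mod_cast this
    have hnt : (n:ℝ) * t = 2 := le_antisymm (by linarith) (by linarith)
    push_cast
    nlinarith [hnt]

lemma upsNN_ge (n : ℕ) (hn : 2 ≤ n) (t : ℝ) (ht0 : 2 / n < t) (ht1 : t ≤ 1) :
    upsNN n t ≥ -t * ((n : ℝ) * ((n : ℝ) - 1) / 2) + ((n:ℝ) * t - 2) := by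
  have hnpos : (0:ℝ) < n := by positivity
  have hgt : 1 < (n : ℝ) * t / 2 := by
    have h2 : 2 < t * n := (div_lt_iff₀ hnpos).mp ht0
    nlinarith
  have h1 : (1:ℤ) ≤ ⌊(n : ℝ) * t / 2⌋ := Int.le_floor.2 (by exact_mod_cast hgt.le)
  have hfl : ((⌊(n : ℝ) * t / 2⌋ : ℤ) : ℝ) ≤ (n : ℝ) * t / 2 := Int.floor_le _
  set i : ℤ := ⌊(n : ℝ) * t / 2⌋ with hi
  have h1' : (1:ℝ) ≤ (i:ℝ) := by exact_mod_cast h1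
  unfold upsNN
  rw [← hi]
  rcases eq_or_lt_of_le h1 with h | h
  · rw [← h]; push_cast; nlinarith
  · have h2 : (2:ℝ) ≤ (i:ℝ) := by exact_mod_cast h
    nlinarith [mul_nonneg (sub_nonneg.2 h1') (sub_nonneg.2 (by linarith : (2:ℝ)*(i:ℝ) ≤ (n:ℝ)*t)), mul_nonneg (sub_nonneg.2 h1') (sub_nonneg.2 h2)]

lemma ups_key : ∀ a b : ℕ, 2 ≤ a → a < b → Nat.Coprime a b →
    (∀ t : ℝ, 0 ≤ t → t ≤ 2 / a →
      upsTorus a b t = -t * (((a : ℝ) - 1) * ((b : ℝ) - 1) / 2)) ∧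
    (∀ t : ℝ, 2 / a < t → t ≤ 1 →
      upsTorus a b t ≥ -t * (((a : ℝ) - 1) * ((b : ℝ) - 1) / 2)
        + ((b / a : ℕ) : ℝ) * ((a : ℝ) * t - 2)) := by
  intro a
  induction a using Nat.strong_induction_on with
  | _ a ih =>
    intro b ha hab hcop
    have hapos : (0:ℝ) < a := by positivity
    have hr0 : b % a ≠ 0 := by
      intro h
      have h2 : a ∣ b := Nat.dvd_of_mod_eq_zero h
      have h3 : a ∣ Nat.gcd a b := Nat.dvd_gcd dvd_rfl h2
      rw [hcop] at h3
      have := Nat.eq_one_of_dvd_one h3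
      omega
    have hrlt : b % a < a := Nat.mod_lt _ (by omega)
    have hq1 : 1 ≤ b / a := Nat.one_le_div_iff (by omega) |>.2 hab.le
    have hb : (b : ℝ) = (a : ℝ) * ((b / a : ℕ) : ℝ) + ((b % a : ℕ) : ℝ) := by
      exact_mod_cast congrArg (Nat.cast : ℕ → ℝ) (Nat.div_add_mod b a).symm
    have hunfold : ∀ t : ℝ, upsTorus a b t
        = ((b / a : ℕ) : ℝ) * upsNN a t + upsTorus (b % a) a t := by
      intro t; rw [upsTorus, dif_neg (by omega)]
    -- facts about the remainder knot
    have hrec : (∀ t : ℝ, 0 ≤ t → t ≤ 2 / a →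
          upsTorus (b % a) a t = -t * ((((b % a : ℕ) : ℝ) - 1) * ((a : ℝ) - 1) / 2)) ∧
        (∀ t : ℝ, 2 / a < t → t ≤ 1 →
          upsTorus (b % a) a t ≥ -t * ((((b % a : ℕ) : ℝ) - 1) * ((a : ℝ) - 1) / 2)) := by
      rcases eq_or_lt_of_le (Nat.one_le_iff_ne_zero.2 hr0) with h1 | h2
      · have hz : ∀ t : ℝ, upsTorus (b % a) a t = 0 := by
          intro t; rw [upsTorus, dif_pos (by omega)]
        constructor <;> intro t _ _ <;> rw [hz, ← h1] <;> norm_num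
      · have hcop' : Nat.Coprime (b % a) a := by
          have := Nat.gcd_rec a b
          unfold Nat.Coprime at *
          omega
        obtain ⟨hEq, hGe⟩ := ih (b % a) hrlt a h2 hrlt hcop'
        have hrpos : (0:ℝ) < (b % a : ℕ) := by positivity
        have h2a2r : 2 / (a:ℝ) ≤ 2 / ((b % a : ℕ) : ℝ) := by
          apply div_le_div_of_nonneg_left (by norm_num) hrpos
          exact_mod_cast hrlt.le
        constructor
        · intro t ht0 ht1
          exact hEq t ht0 (ht1.trans h2a2r)
        · intro t ht0 ht1
          rcases le_or_gt t (2 / ((b % a : ℕ) : ℝ)) with h | h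
          · rw [hEq t (by linarith [div_nonneg (by norm_num : (0:ℝ) ≤ 2) hapos.le]) h]
          · have := hGe t h ht1
            have hq' : (1:ℝ) ≤ ((a / (b % a) : ℕ) : ℝ) := by
              exact_mod_cast Nat.one_le_div_iff (by omega) |>.2 hrlt.le
            have hrt : ((b % a : ℕ) : ℝ) * t - 2 > 0 := by
              have := (div_lt_iff₀ hrpos).mp h
              nlinarith
            nlinarith
    obtain ⟨hEq, hGe⟩ := hrec
    constructor
    · intro t ht0 ht1
      rw [hunfold, upsNN_eq a ha t ht0 ht1, hEq t ht0 ht1, hb]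
      ring
    · intro t ht0 ht1
      have h1 := upsNN_ge a ha t ht0 ht1
      have h2 := hGe t ht0 ht1
      have hq : (1:ℝ) ≤ ((b / a : ℕ) : ℝ) := by exact_mod_cast hq1
      rw [hunfold]
      rw [hb]
      nlinarith [mul_le_mul_of_nonneg_left h1 (by linarith : (0:ℝ) ≤ ((b / a : ℕ) : ℝ))]


/-- For coprime `2 ≤ a < b`: `Υ_{T(a,b)}(t) = -t·g₄(T(a,b))` for `t ∈ [0, 2/a]`, where
`g₄(T(a,b)) = (a-1)(b-1)/2`, and `Υ_{T(a,b)}(t) ≥ -t·g₄(T(a,b)) + ⌊b/a⌋(at - 2)` for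
`t ∈ (2/a, 1]`. -/
theorem upsilon_torus_genus_bounds (a b : ℕ) (ha : 2 ≤ a) (hab : a < b)
    (hcop : Nat.Coprime a b) (g₄ : ℝ) (hg₄ : g₄ = ((a : ℝ) - 1) * ((b : ℝ) - 1) / 2) :
    (∀ t ∈ Set.Icc (0 : ℝ) (2 / a), upsTorus a b t = -t * g₄) ∧
    (∀ t : ℝ, 2 / a < t → t ≤ 1 →
      upsTorus a b t ≥ -t * g₄ + ((b / a : ℕ) : ℝ) * ((a : ℝ) * t - 2)) := by
  obtain ⟨hEq, hGe⟩ := ups_key a b ha hab hcop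
  subst hg₄
  refine ⟨fun t ht => hEq t ht.1 ht.2, fun t ht0 ht1 => hGe t ht0 ht1⟩
end

section
/- Suppose Υ : Knots → (ℝ → ℝ) is a map on a commutative group of knot concordance classes (with connected sum and mirror m(K) = -K) such that Υ_{K # L}(t) = Υ_K(t) + Υ_L(t), Υ is a concordance invariant, and |Υ_K(t)| ≤ t·g₄(K) for all t ∈ (0,2], where g₄ is a function satisfying g₄(K # m(L)) = d(K,L), the cobordism distance, with d a metric. Suppose K, L are knots, m, n, k are positive integers, and: (i) Υ_L(t) ≥ -t·g₄(L) + k(nt - 2) for t ∈ (2/n, 1]; (ii) Υ_K(2/m) = -(2/m)·g₄(K); (iii) m < n and 2/m ≤ 1. Then d(K,L) ≥ k(n - m) + g₄(K) - g₄(L). -/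
/-- Abstract core of the improved triangle inequality: for an additive concordance
invariant `Υ` with `|Υ_K(t)| ≤ t·g₄(K)` and cobordism distance `d(K,L) = g₄(K - L)`,
hypotheses (i)–(iii) imply `d(K,L) ≥ k(n-m) + g₄(K) - g₄(L)`. -/
theorem improved_triangle_inequality {G : Type*} [AddCommGroup G]
    (Υ : G → ℝ → ℝ) (g₄ : G → ℝ) (d : G → G → ℝ)
    (hadd : ∀ K L : G, ∀ t : ℝ, Υ (K + L) t = Υ K t + Υ L t)
    (hbound : ∀ K : G, ∀ t ∈ Set.Ioc (0 : ℝ) 2, |Υ K t| ≤ t * g₄ K)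
    (hg₄symm : ∀ K : G, g₄ (-K) = g₄ K)
    (hd : ∀ K L : G, d K L = g₄ (K - L))
    (K L : G) (m n k : ℕ) (hm : 0 < m) (hn : 0 < n) (hk : 0 < k)
    (hL : ∀ t : ℝ, 2 / (n : ℝ) < t → t ≤ 1 →
      Υ L t ≥ -t * g₄ L + (k : ℝ) * ((n : ℝ) * t - 2))
    (hK : Υ K (2 / (m : ℝ)) = -(2 / (m : ℝ)) * g₄ K)
    (hmn : m < n) (hm2 : 2 / (m : ℝ) ≤ 1) :
    d K L ≥ (k : ℝ) * ((n : ℝ) - (m : ℝ)) + g₄ K - g₄ L := by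
  have hmpos : (0:ℝ) < m := by exact_mod_cast hm
  have hnpos : (0:ℝ) < n := by exact_mod_cast hn
  set t : ℝ := 2 / (m : ℝ) with ht
  have htpos : 0 < t := by positivity
  have ht2 : t ∈ Set.Ioc (0:ℝ) 2 := ⟨htpos, by linarith⟩
  have htn : 2 / (n : ℝ) < t := by
    rw [ht]
    apply div_lt_div_of_pos_left (by norm_num) hmpos
    exact_mod_cast hmn
  have hzero : Υ 0 t = 0 := by
    have := hadd 0 0 t; simp at this; linarith
  have hneg : Υ (-L) t = -Υ L t := by
    have h := hadd L (-L) t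
    rw [add_neg_cancel, hzero] at h; linarith
  have hKL : Υ (K - L) t = Υ K t - Υ L t := by
    rw [sub_eq_add_neg, hadd, hneg, sub_eq_add_neg]
  have hb := hbound (K - L) t ht2
  have hLb := hL t htn hm2
  have h1 : Υ L t - Υ K t ≤ t * g₄ (K - L) := by
    have := abs_le.1 hb
    have h2 := this.1
    rw [hKL] at h2; linarith
  have hKt : Υ K t = -t * g₄ K := hK
  have hmt : (m : ℝ) * t = 2 := by rw [ht]; field_simp
  have key : t * ((k : ℝ) * ((n:ℝ) - m) + g₄ K - g₄ L) ≤ t * g₄ (K - L) := by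
    have : t * ((k : ℝ) * ((n:ℝ) - m)) = (k:ℝ) * ((n:ℝ) * t - 2) := by
      rw [← hmt]; ring
    nlinarith [hLb, h1, hKt]
  rw [hd]
  have := (mul_le_mul_iff_right₀ htpos).1 key
  linarith
end
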